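/- arXiv:2012.07720 — 4 statements merged into one kernel-verified Lean document; each statement's English description precedes it below -/
import Mathlib

section
/- Let s₁ > 0 and h > 0 with h² ≤ s₁², let N : ℝ → ℝ be continuous with N(0) = 0 and N(s₁) = −h², set W(s) = ½s² + N(s) and ω̄² = 1 − h²/s₁². For r ≥ 1 define the radial test function u_r : ℝ³ → ℝ by u_r(x) = s₁ if |x| ≤ r, u_r(x) = s₁(r + 1 − |x|) if r < |x| < r+1, and u_r(x) = 0 if |x| ≥ r+1, and define F[u] = ½∫_{ℝ³}|∇u|²dx + ∫_{ℝ³}(W(u) − ½ω̄²u²)dx. Then there is a constant C₁ > 0, depending only on s₁ and sup_{s∈[0,s₁]}|N(s)|, such that F[u_r] ≤ C₁ r² − (2/3)π r³ h² for every r ≥ 1. In particular F[u_r] → −∞ as r → ∞. -/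
/-! On the ball `|x| < r` the test function is the constant `s₁`, where the potential
`V(s) = W(s) - ½ω̄²s²` equals `-h²/2`; this region contributes `(4π/3) r³ · (-h²/2)`.
Everything else is confined to the transition layer `r ≤ |x| ≤ r + 1`: there `u_r` takes values
in `[0, s₁]`, so `|V(u_r)|` is bounded by `max_{[0, s₁]} |V|`, and `u_r` is Lipschitz, so its
partial derivatives are bounded by a multiple of `s₁`. The layer has volume
`(4π/3)((r + 1)³ - r³) ≤ (28π/3) r²`. -/

open MeasureTheory Real Filter

/-- Physical space `ℝ³`. -/
abbrev R3 : Type := Fin 3 → ℝ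

/-- Partial derivative `∂_{x_i}` of a function on space `ℝ³`. -/
noncomputable def pd (i : Fin 3) (f : R3 → ℝ) (x : R3) : ℝ :=
  fderiv ℝ f x (Pi.single i 1)

open Metric Set

lemma sqrt_sum_sq_eq_norm_toLp {ι : Type*} [Fintype ι] (x : ι → ℝ) :
    √(∑ i, x i ^ 2) = ‖WithLp.toLp 2 x‖ := by
  simp [EuclideanSpace.norm_eq]

lemma lipschitzWith_norm_toLp {ι : Type*} [Fintype ι] :
    LipschitzWith (NNReal.sqrt (Fintype.card ι)) (fun x : ι → ℝ => ‖WithLp.toLp 2 x‖) := by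
  have := lipschitzWith_one_norm.comp (PiLp.lipschitzWith_toLp 2 (fun _ : ι => ℝ))
  simpa [NNReal.sqrt_eq_rpow, Function.comp_def] using this

lemma abs_pd_le_of_lipschitzWith {f : R3 → ℝ} {K : NNReal} (hf : LipschitzWith K f)
    (i : Fin 3) (x : R3) : |pd i f x| ≤ K :=
  -- `norm_fderiv_le_of_lipschitz` also covers points where `f` is not differentiable,
  -- since `fderiv` is `0` there.
  calc |pd i f x| ≤ ‖fderiv ℝ f x‖ * ‖(Pi.single i 1 : R3)‖ := (fderiv ℝ f x).le_opNorm _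
    _ ≤ K := by rw [Pi.norm_single, norm_one, mul_one]; exact norm_fderiv_le_of_lipschitz ℝ hf

lemma pd_eq_zero_of_eventuallyEq_const {f : R3 → ℝ} {x : R3} {c : ℝ}
    (hf : f =ᶠ[nhds x] fun _ => c) (i : Fin 3) : pd i f x = 0 := by
  rw [pd, hf.fderiv_eq, fderiv_const_apply, zero_apply]

def euclBall (r : ℝ) : Set R3 := WithLp.toLp 2 ⁻¹' ball 0 r

def transitionLayer (r : ℝ) : Set R3 :=
  WithLp.toLp 2 ⁻¹' (closedBall 0 (r + 1) \ ball 0 r)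

lemma mem_euclBall {r : ℝ} {x : R3} : x ∈ euclBall r ↔ ‖WithLp.toLp 2 x‖ < r := by
  simp [euclBall]

lemma mem_transitionLayer {r : ℝ} {x : R3} :
    x ∈ transitionLayer r ↔ r ≤ ‖WithLp.toLp 2 x‖ ∧ ‖WithLp.toLp 2 x‖ ≤ r + 1 := by
  simp [transitionLayer, and_comm]

lemma measurableSet_euclBall (r : ℝ) : MeasurableSet (euclBall r) :=
  (MeasurableEquiv.toLp 2 R3).measurable measurableSet_ball

lemma measurableSet_transitionLayer (r : ℝ) : MeasurableSet (transitionLayer r) :=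
  (MeasurableEquiv.toLp 2 R3).measurable (measurableSet_closedBall.diff measurableSet_ball)

lemma volume_euclBall (r : ℝ) :
    volume (euclBall r) = volume (ball (0 : EuclideanSpace ℝ (Fin 3)) r) :=
  (PiLp.volume_preserving_toLp (Fin 3)).measure_preimage measurableSet_ball.nullMeasurableSet

lemma volume_transitionLayer (r : ℝ) :
    volume (transitionLayer r) =
      volume (closedBall (0 : EuclideanSpace ℝ (Fin 3)) (r + 1) \ ball 0 r) :=
  (PiLp.volume_preserving_toLp (Fin 3)).measure_preimage
    (measurableSet_closedBall.diff measurableSet_ball).nullMeasurableSet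

lemma measureReal_euclBall {r : ℝ} (hr : 0 ≤ r) :
    volume.real (euclBall r) = 4 / 3 * π * r ^ 3 := by
  rw [measureReal_def, volume_euclBall, EuclideanSpace.volume_ball_fin_three,
    ENNReal.toReal_mul, ENNReal.toReal_pow, ENNReal.toReal_ofReal hr,
    ENNReal.toReal_ofReal (by positivity)]
  ring

lemma measureReal_transitionLayer {r : ℝ} (hr : 0 ≤ r) :
    volume.real (transitionLayer r) = 4 / 3 * π * ((r + 1) ^ 3 - r ^ 3) := by
  rw [measureReal_def, volume_transitionLayer, ← measureReal_def,
    measureReal_sdiff (ball_subset_closedBall.trans (closedBall_subset_closedBall (by linarith)))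
      measurableSet_ball measure_closedBall_lt_top.ne, measureReal_def, measureReal_def,
    EuclideanSpace.volume_closedBall_fin_three, EuclideanSpace.volume_ball_fin_three]
  simp only [ENNReal.toReal_mul, ENNReal.toReal_pow, ENNReal.toReal_ofReal hr,
    ENNReal.toReal_ofReal (by linarith : (0 : ℝ) ≤ r + 1),
    ENNReal.toReal_ofReal (by positivity : 0 ≤ π * 4 / 3)]
  ring

lemma integrable_indicator_euclBall (r c : ℝ) : Integrable ((euclBall r).indicator fun _ => c) :=
  (integrableOn_const (by rw [volume_euclBall]; exact measure_ball_lt_top.ne)).integrable_indicator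
    (measurableSet_euclBall r)

lemma integrable_indicator_transitionLayer (r c : ℝ) :
    Integrable ((transitionLayer r).indicator fun _ => c) :=
  (integrableOn_const (by
    rw [volume_transitionLayer]
    exact ((measure_mono sdiff_subset).trans_lt measure_closedBall_lt_top).ne)).integrable_indicator
      (measurableSet_transitionLayer r)

noncomputable def rampProfile (a r t : ℝ) : ℝ := a * max 0 (min 1 (r + 1 - t))

lemma lipschitzWith_rampProfile (a r : ℝ) : LipschitzWith ‖a‖₊ (rampProfile a r) := by
  refine LipschitzWith.of_dist_le_mul fun s t => ?_
  have hclamp := (LipschitzWith.projIcc zero_le_one).dist_le_mul (r + 1 - s) (r + 1 - t)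
  rw [Subtype.dist_eq, Set.coe_projIcc, Set.coe_projIcc, NNReal.coe_one, one_mul,
    Real.dist_eq, Real.dist_eq, sub_sub_sub_cancel_left, abs_sub_comm t s] at hclamp
  simp only [rampProfile, Real.dist_eq, coe_nnnorm, Real.norm_eq_abs, ← mul_sub, abs_mul]
  exact mul_le_mul_of_nonneg_left hclamp (abs_nonneg a)

lemma rampProfile_of_le {a r t : ℝ} (ht : t ≤ r) : rampProfile a r t = a := by
  rw [rampProfile, min_eq_left (by linarith), max_eq_right zero_le_one, mul_one]

lemma rampProfile_of_ge {a r t : ℝ} (ht : r + 1 ≤ t) : rampProfile a r t = 0 := by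
  rw [rampProfile, min_eq_right (by linarith), max_eq_left (by linarith), mul_zero]

lemma rampProfile_mem_Icc {a : ℝ} (ha : 0 ≤ a) (r t : ℝ) : rampProfile a r t ∈ Icc 0 a :=
  ⟨mul_nonneg ha (le_max_left _ _),
    mul_le_of_le_one_right ha (max_le zero_le_one (min_le_left _ _))⟩

lemma rampProfile_eq_ite (a r t : ℝ) :
    rampProfile a r t = if t ≤ r then a else if t < r + 1 then a * (r + 1 - t) else 0 := by
  split_ifs with h₁ h₂
  · exact rampProfile_of_le h₁
  · rw [rampProfile, min_eq_right (by linarith), max_eq_right (by linarith)]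
  · exact rampProfile_of_ge (not_lt.1 h₂)

noncomputable def radialRamp (a r : ℝ) (x : R3) : ℝ := rampProfile a r ‖WithLp.toLp 2 x‖

lemma lipschitzWith_radialRamp (a r : ℝ) :
    LipschitzWith (‖a‖₊ * NNReal.sqrt 3) (radialRamp a r) := by
  have h := (lipschitzWith_rampProfile a r).comp (lipschitzWith_norm_toLp (ι := Fin 3))
  rwa [Fintype.card_fin, Nat.cast_ofNat] at h

lemma radialRamp_eventuallyEq_of_lt {a r : ℝ} {x : R3} (hx : ‖WithLp.toLp 2 x‖ < r) :
    radialRamp a r =ᶠ[nhds x] fun _ => a := by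
  filter_upwards [(isOpen_lt lipschitzWith_norm_toLp.continuous continuous_const).mem_nhds hx]
    with y hy using rampProfile_of_le (le_of_lt hy)

lemma radialRamp_eventuallyEq_of_gt {a r : ℝ} {x : R3} (hx : r + 1 < ‖WithLp.toLp 2 x‖) :
    radialRamp a r =ᶠ[nhds x] fun _ => 0 := by
  filter_upwards [(isOpen_lt continuous_const lipschitzWith_norm_toLp.continuous).mem_nhds hx]
    with y hy using rampProfile_of_ge (le_of_lt hy)

lemma sum_pd_sq_radialRamp_le (a r : ℝ) (x : R3) :
    ∑ i, pd i (radialRamp a r) x ^ 2 ≤ (transitionLayer r).indicator (fun _ => 9 * a ^ 2) x := by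
  by_cases hx : x ∈ transitionLayer r
  · rw [indicator_of_mem hx]
    have hsq : ∀ i, pd i (radialRamp a r) x ^ 2 ≤ 3 * a ^ 2 := fun i => by
      have h := abs_pd_le_of_lipschitzWith (lipschitzWith_radialRamp a r) i x
      rw [NNReal.coe_mul, coe_nnnorm, Real.coe_sqrt, NNReal.coe_ofNat, Real.norm_eq_abs] at h
      calc pd i (radialRamp a r) x ^ 2 ≤ (|a| * √3) ^ 2 := sq_le_sq' (abs_le.1 h).1 (abs_le.1 h).2
        _ = 3 * a ^ 2 := by rw [mul_pow, sq_abs, Real.sq_sqrt (by norm_num)]; ring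
    calc ∑ i, pd i (radialRamp a r) x ^ 2 ≤ ∑ _i : Fin 3, 3 * a ^ 2 :=
          Finset.sum_le_sum fun i _ => hsq i
      _ = 9 * a ^ 2 := by rw [Fin.sum_const, nsmul_eq_mul]; ring
  · rw [indicator_of_notMem hx]
    rw [mem_transitionLayer, not_and_or, not_le, not_le] at hx
    have hzero : ∀ i, pd i (radialRamp a r) x = 0 := by
      rcases hx with hin | hout
      · exact pd_eq_zero_of_eventuallyEq_const (radialRamp_eventuallyEq_of_lt hin)
      · exact pd_eq_zero_of_eventuallyEq_const (radialRamp_eventuallyEq_of_gt hout)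
    simp [hzero]

lemma comp_radialRamp_le_indicator {a M : ℝ} (ha : 0 ≤ a) {g : ℝ → ℝ} (hg0 : g 0 = 0)
    (hgM : ∀ s ∈ Icc 0 a, g s ≤ M) (r : ℝ) (x : R3) :
    g (radialRamp a r x) ≤
      (euclBall r).indicator (fun _ => g a) x + (transitionLayer r).indicator (fun _ => M) x := by
  rcases lt_or_ge ‖WithLp.toLp 2 x‖ r with hin | hin
  · have hx : x ∉ transitionLayer r := fun h => (mem_transitionLayer.1 h).1.not_gt hin
    rw [indicator_of_mem (mem_euclBall.2 hin), indicator_of_notMem hx, add_zero, radialRamp,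
      rampProfile_of_le hin.le]
  rw [indicator_of_notMem (fun h => (mem_euclBall.1 h).not_ge hin), zero_add]
  rcases le_or_gt ‖WithLp.toLp 2 x‖ (r + 1) with hout | hout
  · rw [indicator_of_mem (mem_transitionLayer.2 ⟨hin, hout⟩)]
    exact hgM _ (rampProfile_mem_Icc ha _ _)
  · rw [indicator_of_notMem (fun h => (mem_transitionLayer.1 h).2.not_gt hout), radialRamp,
      rampProfile_of_ge hout.le, hg0]

lemma integral_sum_pd_sq_radialRamp_le (a : ℝ) {r : ℝ} (hr : 0 ≤ r) :
    ∫ x, ∑ i, pd i (radialRamp a r) x ^ 2 ≤ 9 * a ^ 2 * (4 / 3 * π * ((r + 1) ^ 3 - r ^ 3)) :=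
  calc ∫ x, ∑ i, pd i (radialRamp a r) x ^ 2
      ≤ ∫ x, (transitionLayer r).indicator (fun _ => 9 * a ^ 2) x :=
        integral_mono_of_nonneg (.of_forall fun x => by positivity)
          (integrable_indicator_transitionLayer r _) (.of_forall (sum_pd_sq_radialRamp_le a r))
    _ = 9 * a ^ 2 * (4 / 3 * π * ((r + 1) ^ 3 - r ^ 3)) := by
        rw [integral_indicator_const _ (measurableSet_transitionLayer r), smul_eq_mul,
          measureReal_transitionLayer hr, mul_comm]

lemma integral_comp_radialRamp_le {a M r : ℝ} (ha : 0 ≤ a) (hr : 0 ≤ r) {V : ℝ → ℝ}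
    (hV : Continuous V) (hV0 : V 0 = 0) (hM : ∀ s ∈ Icc 0 a, |V s| ≤ M) :
    ∫ x, V (radialRamp a r x) ≤
      4 / 3 * π * r ^ 3 * V a + 4 / 3 * π * ((r + 1) ^ 3 - r ^ 3) * M := by
  have hint : ∀ c d : ℝ, Integrable fun x =>
      (euclBall r).indicator (fun _ => c) x + (transitionLayer r).indicator (fun _ => d) x :=
    fun c d => (integrable_indicator_euclBall r c).add (integrable_indicator_transitionLayer r d)
  have hVint : Integrable fun x => V (radialRamp a r x) :=
    (hint |V a| M).mono' (hV.comp (lipschitzWith_radialRamp a r).continuous).aestronglyMeasurable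
      (.of_forall fun x => comp_radialRamp_le_indicator ha (g := fun s => |V s|)
        (by rw [hV0, abs_zero]) hM r x)
  calc ∫ x, V (radialRamp a r x)
      ≤ ∫ x, (euclBall r).indicator (fun _ => V a) x
          + (transitionLayer r).indicator (fun _ => M) x :=
        integral_mono hVint (hint _ _) fun x =>
          comp_radialRamp_le_indicator ha hV0 (fun s hs => (le_abs_self _).trans (hM s hs)) r x
    _ = 4 / 3 * π * r ^ 3 * V a + 4 / 3 * π * ((r + 1) ^ 3 - r ^ 3) * M := by
        rw [integral_add (integrable_indicator_euclBall r _)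
            (integrable_indicator_transitionLayer r _),
          integral_indicator_const _ (measurableSet_euclBall r),
          integral_indicator_const _ (measurableSet_transitionLayer r), smul_eq_mul, smul_eq_mul,
          measureReal_euclBall hr, measureReal_transitionLayer hr]

lemma tendsto_mul_sq_sub_mul_cube_atBot (C : ℝ) {c : ℝ} (hc : 0 < c) :
    Tendsto (fun r : ℝ => C * r ^ 2 - c * r ^ 3) atTop atBot := by
  have hlin : Tendsto (fun r : ℝ => C - c * r) atTop atBot :=
    tendsto_atBot_add_const_left _ C (tendsto_neg_atTop_atBot.comp (tendsto_id.const_mul_atTop hc))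
  convert (tendsto_pow_atTop two_ne_zero).atTop_mul_atBot₀ hlin using 1
  funext r
  ring

theorem test_function_energy_estimate_general
    (s₁ h : ℝ) (hs₁ : 0 < s₁) (hh : 0 < h)
    (N : ℝ → ℝ) (hNc : Continuous N) (hN0 : N 0 = 0) (hNs₁ : N s₁ = -h ^ 2)
    (W : ℝ → ℝ) (hW : ∀ s : ℝ, W s = (1 / 2) * s ^ 2 + N s)
    (ωb : ℝ) (hωb : ωb ^ 2 = 1 - h ^ 2 / s₁ ^ 2)
    (ur : ℝ → R3 → ℝ)
    (hur : ∀ r : ℝ, ∀ x : R3, ur r x =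
      if Real.sqrt (∑ i, (x i) ^ 2) ≤ r then s₁
      else if Real.sqrt (∑ i, (x i) ^ 2) < r + 1 then
        s₁ * (r + 1 - Real.sqrt (∑ i, (x i) ^ 2))
      else 0)
    (F : (R3 → ℝ) → ℝ)
    (hF : ∀ u : R3 → ℝ, F u =
      (1 / 2) * (∫ x : R3, ∑ i, (pd i u x) ^ 2)
        + ∫ x : R3, (W (u x) - (1 / 2) * ωb ^ 2 * (u x) ^ 2)) :
    (∃ C₁ > 0, ∀ r : ℝ, 1 ≤ r → F (ur r) ≤ C₁ * r ^ 2 - (2 / 3) * π * r ^ 3 * h ^ 2)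
    ∧ Tendsto (fun r : ℝ => F (ur r)) atTop atBot := by
  set V : ℝ → ℝ := fun s => W s - 1 / 2 * ωb ^ 2 * s ^ 2 with hV
  have hVc : Continuous V := by simp only [hV, hW]; fun_prop
  have hV0 : V 0 = 0 := by simp [hV, hW, hN0]
  have hVs₁ : V s₁ = -h ^ 2 / 2 := by simp only [hV, hW, hNs₁, hωb]; field_simp; ring
  obtain ⟨M, hM⟩ := isCompact_Icc.exists_bound_of_continuousOn (hVc.continuousOn (s := Icc 0 s₁))
  have hM0 : 0 ≤ M := (norm_nonneg _).trans (hM s₁ ⟨hs₁.le, le_rfl⟩)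
  have hur' : ∀ r, ur r = radialRamp s₁ r := fun r => funext fun x => by
    rw [hur, radialRamp, rampProfile_eq_ite, sqrt_sum_sq_eq_norm_toLp]
  set C₁ := 28 * π / 3 * (9 * s₁ ^ 2 / 2 + M) with hC₁
  have key : ∀ r : ℝ, 1 ≤ r → F (ur r) ≤ C₁ * r ^ 2 - (2 / 3) * π * r ^ 3 * h ^ 2 := by
    intro r hr
    have hgrad := integral_sum_pd_sq_radialRamp_le s₁ (r := r) (by linarith)
    have hpot := integral_comp_radialRamp_le hs₁.le (r := r) (by linarith) hVc hV0 hM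
    have hlayer : 4 / 3 * π * ((r + 1) ^ 3 - r ^ 3) ≤ 28 * π / 3 * r ^ 2 := by
      have : (r + 1) ^ 3 - r ^ 3 ≤ 7 * r ^ 2 := by nlinarith
      linarith [mul_le_mul_of_nonneg_left this (by positivity : 0 ≤ 4 / 3 * π)]
    calc F (ur r) ≤ (9 * s₁ ^ 2 / 2 + M) * (4 / 3 * π * ((r + 1) ^ 3 - r ^ 3))
          + 4 / 3 * π * r ^ 3 * V s₁ := by rw [hF, hur']; linarith
      _ ≤ C₁ * r ^ 2 - (2 / 3) * π * r ^ 3 * h ^ 2 := by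
          rw [hVs₁, hC₁]
          linarith [mul_le_mul_of_nonneg_left hlayer (by positivity : 0 ≤ 9 * s₁ ^ 2 / 2 + M)]
  refine ⟨⟨C₁, by positivity, key⟩, tendsto_atBot_mono' atTop ?_
    (tendsto_mul_sq_sub_mul_cube_atBot C₁ (by positivity : 0 < 2 / 3 * π * h ^ 2))⟩
  filter_upwards [eventually_ge_atTop 1] with r hr
  linarith [key r hr]

/-- for the radial test functions `u_r` (equal to `s₁` on the ball of radius
`r`, affine in `|x|` in the transition layer `r < |x| < r+1`, and `0` outside), the
functional `F[u] = ½∫|∇u|² + ∫(W(u) − ½ω̄²u²)` satisfies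
`F[u_r] ≤ C₁r² − (2/3)πr³h²` for all `r ≥ 1` and some constant `C₁ > 0`;
in particular `F[u_r] → −∞` as `r → ∞`. -/
theorem test_function_energy_estimate
    (s₁ h : ℝ) (hs₁ : 0 < s₁) (hh : 0 < h) (hhs : h ^ 2 ≤ s₁ ^ 2)
    (N : ℝ → ℝ) (hNc : Continuous N) (hN0 : N 0 = 0) (hNs₁ : N s₁ = -h ^ 2)
    (W : ℝ → ℝ) (hW : ∀ s : ℝ, W s = (1 / 2) * s ^ 2 + N s)
    (ωb : ℝ) (hωb : ωb ^ 2 = 1 - h ^ 2 / s₁ ^ 2)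
    (ur : ℝ → R3 → ℝ)
    (hur : ∀ r : ℝ, ∀ x : R3, ur r x =
      if Real.sqrt (∑ i, (x i) ^ 2) ≤ r then s₁
      else if Real.sqrt (∑ i, (x i) ^ 2) < r + 1 then
        s₁ * (r + 1 - Real.sqrt (∑ i, (x i) ^ 2))
      else 0)
    (F : (R3 → ℝ) → ℝ)
    (hF : ∀ u : R3 → ℝ, F u =
      (1 / 2) * (∫ x : R3, ∑ i, (pd i u x) ^ 2)
        + ∫ x : R3, (W (u x) - (1 / 2) * ωb ^ 2 * (u x) ^ 2)) :
    (∃ C₁ > 0, ∀ r : ℝ, 1 ≤ r → F (ur r) ≤ C₁ * r ^ 2 - (2 / 3) * π * r ^ 3 * h ^ 2)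
    ∧ Tendsto (fun r : ℝ => F (ur r)) atTop atBot :=
  test_function_energy_estimate_general s₁ h hs₁ hh N hNc hN0 hNs₁ W hW ωb hωb ur hur F hF
end

section
/- Let ω, β ∈ ℝ, let W : ℝ → ℝ be continuous with W(0) = 0, and let u : ℝ³ → ℝ be continuously differentiable with compact support. Define J[v] = ½∫_{ℝ³}|∇v|²dx + ∫_{ℝ³}(W(v) − ½ω²v²)dx + β²ω² K(v) and u_λ(x) = u(x/λ) for λ > 0. If the function λ ↦ J[u_λ] has derivative 0 at λ = 1, then the Pohozaev–Derrick identity holds: ∫_{ℝ³} W(u) dx = ½ω²∫_{ℝ³}u²dx − (1/6)∫_{ℝ³}|∇u|²dx − (5/3)ω²β² K(u). -/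
open MeasureTheory Real

/-- The Coulomb energy `K(u) = ∬ u(x)u(y)/(4π|x−y|) dx dy` associated with the Green
function `G(x) = 1/(4π|x|)` of `−Δ` on `ℝ³` (Euclidean distance). -/
noncomputable def coulomb (u : R3 → ℝ) : ℝ :=
  ∫ x : R3, ∫ y : R3, u x * u y / (4 * π * Real.sqrt (∑ i, (x i - y i) ^ 2))

/-!
Under the dilation `u ↦ u(·/λ)` on `ℝ³` the three parts of `J` scale homogeneously: the
Dirichlet term like `λ`, the potential term like `λ³` (Jacobian), and the Coulomb term like
`λ⁵` (Jacobian `λ⁶` times the homogeneity `λ⁻¹` of the kernel). Hence near `λ = 1`,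
`J[u_λ] = λ·A/2 + λ³·B + λ⁵·C`, and a vanishing derivative at `λ = 1` is the linear
relation `A/2 + 3B + 5C = 0`, which is the identity once `B` is split into its two integrals.
-/

open Filter Topology

lemma sqrt_sum_sq_smul_sub_smul {ι : Type*} [Fintype ι] (c : ℝ) (x y : ι → ℝ) :
    Real.sqrt (∑ i, ((c • x) i - (c • y) i) ^ 2)
      = |c| * Real.sqrt (∑ i, (x i - y i) ^ 2) := by
  have hsum : ∑ i, ((c • x) i - (c • y) i) ^ 2 = c ^ 2 * ∑ i, (x i - y i) ^ 2 := by
    rw [Finset.mul_sum]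
    exact Finset.sum_congr rfl fun i _ => by simp only [Pi.smul_apply, smul_eq_mul]; ring
  rw [hsum, Real.sqrt_mul (sq_nonneg c), Real.sqrt_sq_eq_abs]

lemma pd_comp_smul (u : R3 → ℝ) (c : ℝ) (i : Fin 3) (x : R3) :
    pd i (fun y => u (c • y)) x = c * pd i u (c • x) := by
  rcases eq_or_ne c 0 with rfl | hc
  · simp [pd]
  · set e : R3 ≃L[ℝ] R3 := ContinuousLinearEquiv.smulLeft (Units.mk0 c hc)
    have hcomp : (fun y => u (c • y)) = u ∘ e := rfl
    simp [pd, hcomp, e.comp_right_fderiv, e]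

lemma integral_comp_inv_smul_R3 (f : R3 → ℝ) {lam : ℝ} (hlam : 0 ≤ lam) :
    ∫ x : R3, f (lam⁻¹ • x) = lam ^ 3 * ∫ x : R3, f x := by
  simp [Measure.integral_comp_inv_smul_of_nonneg volume f hlam]

lemma integral_sum_pd_sq_comp_inv_smul (u : R3 → ℝ) {lam : ℝ} (hlam : 0 < lam) :
    ∫ x : R3, ∑ i, (pd i (fun y => u (lam⁻¹ • y)) x) ^ 2
      = lam * ∫ x : R3, ∑ i, (pd i u x) ^ 2 := by
  simp_rw [pd_comp_smul, mul_pow, ← Finset.mul_sum]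
  rw [integral_const_mul, integral_comp_inv_smul_R3 (fun x => ∑ i, (pd i u x) ^ 2) hlam.le]
  field_simp

lemma coulomb_comp_inv_smul (u : R3 → ℝ) {lam : ℝ} (hlam : 0 < lam) :
    coulomb (fun x => u (lam⁻¹ • x)) = lam ^ 5 * coulomb u := by
  set g : R3 → R3 → ℝ := fun x y => u x * u y / (4 * π * Real.sqrt (∑ i, (x i - y i) ^ 2))
  have hg : ∀ x y : R3,
      u (lam⁻¹ • x) * u (lam⁻¹ • y) / (4 * π * Real.sqrt (∑ i, (x i - y i) ^ 2))
        = lam⁻¹ * g (lam⁻¹ • x) (lam⁻¹ • y) := by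
    intro x y
    simp only [g, sqrt_sum_sq_smul_sub_smul, abs_of_pos (inv_pos.2 hlam)]
    field_simp
  have hinner : ∀ x : R3, ∫ y : R3, lam⁻¹ * g (lam⁻¹ • x) (lam⁻¹ • y)
      = lam ^ 2 * ∫ y : R3, g (lam⁻¹ • x) y := by
    intro x
    rw [integral_const_mul, integral_comp_inv_smul_R3 (g (lam⁻¹ • x)) hlam.le]
    field_simp
  simp_rw [coulomb, hg, hinner]
  rw [integral_const_mul, integral_comp_inv_smul_R3 (fun x => ∫ y, g x y) hlam.le]
  ring

lemma hasDerivAt_dilation_polynomial (a b c : ℝ) :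
    HasDerivAt (fun l : ℝ => l * a + l ^ 3 * b + l ^ 5 * c) (a + 3 * b + 5 * c) 1 := by
  have h1 := (hasDerivAt_id (1 : ℝ)).mul_const a
  have h3 := (hasDerivAt_pow 3 (1 : ℝ)).mul_const b
  have h5 := (hasDerivAt_pow 5 (1 : ℝ)).mul_const c
  simpa using (h1.fun_add h3).fun_add h5

/-- if the dilation derivative `(d/dλ)J[u_λ]|_{λ=1}` vanishes, where
`J[v] = ½∫|∇v|² + ∫(W(v) − ½ω²v²) + β²ω²K(v)` and `u_λ(x) = u(x/λ)`, then the
Pohozaev–Derrick identity holds: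
`∫W(u) = ½ω²∫u² − (1/6)∫|∇u|² − (5/3)ω²β²K(u)`. -/
theorem pohozaev_derrick_identity
    (ω β : ℝ) (W : ℝ → ℝ) (hWc : Continuous W) (hW0 : W 0 = 0)
    (u : R3 → ℝ) (hu : ContDiff ℝ 1 u) (hsupp : HasCompactSupport u)
    (J : (R3 → ℝ) → ℝ)
    (hJ : ∀ v : R3 → ℝ, J v =
      (1 / 2) * (∫ x : R3, ∑ i, (pd i v x) ^ 2)
        + (∫ x : R3, (W (v x) - (1 / 2) * ω ^ 2 * (v x) ^ 2))
        + β ^ 2 * ω ^ 2 * coulomb v)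
    (hcrit : HasDerivAt (fun lam : ℝ => J (fun x => u (lam⁻¹ • x))) 0 1) :
    (∫ x : R3, W (u x)) =
      (1 / 2) * ω ^ 2 * (∫ x : R3, (u x) ^ 2)
        - (1 / 6) * (∫ x : R3, ∑ i, (pd i u x) ^ 2)
        - (5 / 3) * ω ^ 2 * β ^ 2 * coulomb u := by
  have hWu : Integrable fun x => W (u x) :=
    (hWc.comp hu.continuous).integrable_of_hasCompactSupport (hsupp.comp_left hW0)
  have hu2 : Integrable fun x => (u x) ^ 2 :=
    (hu.continuous.pow 2).integrable_of_hasCompactSupport (hsupp.comp_left (zero_pow two_ne_zero))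
  have hB : ∫ x : R3, (W (u x) - (1 / 2) * ω ^ 2 * (u x) ^ 2)
      = (∫ x : R3, W (u x)) - (1 / 2) * ω ^ 2 * ∫ x : R3, (u x) ^ 2 := by
    rw [integral_sub hWu (hu2.const_mul _), integral_const_mul]
  set A := ∫ x : R3, ∑ i, (pd i u x) ^ 2
  set B := ∫ x : R3, (W (u x) - (1 / 2) * ω ^ 2 * (u x) ^ 2)
  set C := β ^ 2 * ω ^ 2 * coulomb u
  have hdilation : (fun lam : ℝ => lam * (A / 2) + lam ^ 3 * B + lam ^ 5 * C)
      =ᶠ[𝓝 1] fun lam => J (fun x => u (lam⁻¹ • x)) := by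
    filter_upwards [Ioi_mem_nhds one_pos] with lam hlam
    rw [hJ, integral_sum_pd_sq_comp_inv_smul u hlam, coulomb_comp_inv_smul u hlam,
      integral_comp_inv_smul_R3 (fun x => W (u x) - (1 / 2) * ω ^ 2 * (u x) ^ 2) hlam.le]
    ring
  have hvirial : A / 2 + 3 * B + 5 * C = 0 :=
    (hasDerivAt_dilation_polynomial _ _ _).unique (hcrit.congr_of_eventuallyEq hdilation)
  linarith
end

section
/- Let u₀ : ℝ³ → ℝ be Lebesgue integrable, let ω₀, β ∈ ℝ, v ∈ (−1,1), set γ = 1/√(1−v²), and define the boosted soliton fields u_v(t,x) = u₀(γ(x₁−vt), x₂, x₃) and S_v(t,x) = ω₀γ(v x₁ − t). Then for every t ∈ ℝ the electric charge of the moving soliton, q[σ_v] = −β ∫_{ℝ³} ∂ₜS_v(t,x) · u_v(t,x) dx, equals βω₀ ∫_{ℝ³} u₀(x) dx; in particular it is independent of v and t, i.e. the electric charge of a moving soliton is independent of the motion. -/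
open MeasureTheory Real

/-!
The phase `S_v` is affine in `t` with `∂ₜS_v = -ω₀γ`, so the charge is
`βω₀γ ∫ u₀(γx₁ - γvt, x₂, x₃) dx`. The affine substitution in the first coordinate has
Jacobian `γ`, which cancels the factor `γ` and leaves `βω₀ ∫ u₀`.
-/

section ChangeOfVariables

variable {E F : Type*} [NormedAddCommGroup E] [NormedSpace ℝ E] [MeasurableSpace E]
  [BorelSpace E] [FiniteDimensional ℝ E] [NormedAddCommGroup F] [NormedSpace ℝ F]
  (μ : Measure E) [μ.IsAddHaarMeasure]

/- No integrability assumption is needed: `x ↦ A x + c` is a measurable equivalence, so both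
sides vanish together when `f` is not integrable. -/
theorem integral_comp_linearMap_add (f : E → F) {A : E →ₗ[ℝ] E} (hA : LinearMap.det A ≠ 0)
    (c : E) : ∫ x, f (A x + c) ∂μ = |(LinearMap.det A)⁻¹| • ∫ x, f x ∂μ := by
  let B : E ≃L[ℝ] E := (LinearMap.toContinuousLinearMap A).toContinuousLinearEquivOfDetNeZero hA
  have hB : ∀ x, B x = A x := fun _ => rfl
  calc ∫ x, f (A x + c) ∂μ = ∫ x, f (B (x + B.symm c)) ∂μ := by
        simp_rw [map_add, B.apply_symm_apply, hB]
    _ = ∫ x, f (B x) ∂μ := integral_add_right_eq_self (fun y => f (B y)) (B.symm c)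
    _ = ∫ y, f y ∂(μ.map B) := (integral_map_equiv B.toHomeomorph.toMeasurableEquiv f).symm
    _ = |(LinearMap.det A)⁻¹| • ∫ x, f x ∂μ := by
      rw [show (B : E → E) = A from funext hB, Measure.map_linearMap_addHaar_eq_smul_addHaar μ hA,
        integral_smul_measure, ENNReal.toReal_ofReal (abs_nonneg _)]

end ChangeOfVariables

theorem integral_comp_update_mul_add {ι F : Type*} [Fintype ι] [DecidableEq ι]
    [NormedAddCommGroup F] [NormedSpace ℝ F] (f : (ι → ℝ) → F) (i : ι) {a : ℝ} (ha : a ≠ 0)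
    (c : ℝ) : ∫ x, f (Function.update x i (a * x i + c)) = |a|⁻¹ • ∫ x, f x := by
  let A : (ι → ℝ) →ₗ[ℝ] ι → ℝ := Matrix.toLin' (Matrix.diagonal (Function.update 1 i a))
  have hdet : LinearMap.det A = a := by
    rw [LinearMap.det_toLin', Matrix.det_diagonal,
      Finset.prod_update_of_mem (Finset.mem_univ i)]
    simp
  have hA : ∀ x, Function.update x i (a * x i + c) = A x + Pi.single i c := by
    intro x
    funext j
    rcases eq_or_ne j i with rfl | hj
    · simp [A, Matrix.mulVec_diagonal]
    · simp [A, Matrix.mulVec_diagonal, hj]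
  simp_rw [hA, integral_comp_linearMap_add volume f (hdet ▸ ha), hdet, abs_inv]

theorem charge_of_moving_soliton_general
    (u₀ : R3 → ℝ)
    (ω₀ β v : ℝ) (hv : v ∈ Set.Ioo (-1 : ℝ) 1)
    (γ : ℝ) (hγ : γ = 1 / Real.sqrt (1 - v ^ 2))
    (uv Sv : ℝ → R3 → ℝ)
    (huv : ∀ t : ℝ, ∀ x : R3, uv t x = u₀ (Function.update x 0 (γ * (x 0 - v * t))))
    (hSv : ∀ t : ℝ, ∀ x : R3, Sv t x = ω₀ * γ * (v * x 0 - t)) :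
    ∀ t : ℝ,
      -β * (∫ x : R3, deriv (fun s => Sv s x) t * uv t x) = β * ω₀ * ∫ x : R3, u₀ x := by
  intro t
  have hγpos : 0 < γ := by
    have : 0 < 1 - v ^ 2 := by nlinarith [hv.1, hv.2]
    rw [hγ]
    positivity
  have hSt : ∀ x : R3, deriv (fun s => Sv s x) t = -(ω₀ * γ) := by
    intro x
    simp_rw [hSv]
    rw [(((hasDerivAt_id' t).const_sub (v * x 0)).const_mul (ω₀ * γ)).deriv]
    ring
  have huvt : ∀ x : R3, uv t x = u₀ (Function.update x 0 (γ * x 0 + -(γ * v * t))) := by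
    intro x
    rw [huv, mul_sub, mul_assoc, sub_eq_add_neg]
  simp_rw [hSt, huvt, integral_const_mul,
    integral_comp_update_mul_add u₀ 0 hγpos.ne', abs_of_pos hγpos, smul_eq_mul]
  field_simp

/-- the electric charge `q[σ_v] = −β ∫ ∂ₜS_v(t,x) u_v(t,x) dx` of the boosted
soliton `u_v(t,x) = u₀(γ(x₁−vt), x₂, x₃)`, `S_v(t,x) = ω₀γ(vx₁ − t)` equals
`βω₀∫u₀ dx` for every time `t`; in particular it is independent of the motion. -/
theorem charge_of_moving_soliton
    (u₀ : R3 → ℝ) (hint : Integrable u₀)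
    (ω₀ β v : ℝ) (hv : v ∈ Set.Ioo (-1 : ℝ) 1)
    (γ : ℝ) (hγ : γ = 1 / Real.sqrt (1 - v ^ 2))
    (uv Sv : ℝ → R3 → ℝ)
    (huv : ∀ t : ℝ, ∀ x : R3, uv t x = u₀ (Function.update x 0 (γ * (x 0 - v * t))))
    (hSv : ∀ t : ℝ, ∀ x : R3, Sv t x = ω₀ * γ * (v * x 0 - t)) :
    ∀ t : ℝ,
      -β * (∫ x : R3, deriv (fun s => Sv s x) t * uv t x) = β * ω₀ * ∫ x : R3, u₀ x :=
  charge_of_moving_soliton_general u₀ ω₀ β v hv γ hγ uv Sv huv hSv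
end

section
/- Let u₀ : ℝ³ → ℝ be continuously differentiable with compact support and radially symmetric, let ω₀ ∈ ℝ, v ∈ (−1,1) with v ≠ 0, set γ = 1/√(1−v²), and define the boosted soliton fields u_v(t,x) = u₀(γ(x₁−vt), x₂, x₃) and S_v(t,x) = ω₀γ(v x₁ − t). Then for every t ∈ ℝ the matter-field momentum integral P = ∫_{ℝ³}(∂ₜu_v ∇u_v + ∂ₜS_v ∇S_v · u_v²) dx is parallel to the direction of motion e₁ = (1,0,0), its second and third components vanish, and its magnitude satisfies |P| = γ |v| m, where m = (1/3)∫_{ℝ³}|∇u₀|²dx + ω₀²∫_{ℝ³}u₀²dx. Consequently the mass of the moving soliton, defined as |P|/|v|, equals γ m. -/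
/-!
The boosted fields are `u₀ ∘ B_t` and an affine phase, where `B_t x = Λ x + t w` with
`Λ = diag(γ, 1, 1)`. By the chain rule the `i`-th momentum density at `x` is the constant
`-γ v Λᵢᵢ` times `(∂₀u₀ ∂ᵢu₀ + δᵢ₀ ω₀² u₀²)(B_t x)`, and the substitution `z = B_t x`
(Jacobian `γ`) turns its integral into one over the stationary profile. Radial symmetry does the
rest: the reflection `zᵢ ↦ -zᵢ` makes `∂₀u₀ ∂ᵢu₀` odd for `i ≠ 0`, and the transposition of the
coordinates `0` and `i` shows that all `∫ (∂ᵢu₀)²` agree, so `∫ |∇u₀|² = 3 ∫ (∂₀u₀)²`.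
-/

open MeasureTheory Real

section ChangeOfVariables

variable {ι : Type*} [Fintype ι] {E : Type*} [NormedAddCommGroup E] [NormedSpace ℝ E]

theorem integral_comp_linearMap_pi {L : (ι → ℝ) →ₗ[ℝ] ι → ℝ} (hL : LinearMap.det L ≠ 0)
    (F : (ι → ℝ) → E) : ∫ x, F (L x) = |LinearMap.det L|⁻¹ • ∫ x, F x := by
  let e := (L.equivOfDetNeZero hL).toContinuousLinearEquiv.toHomeomorph.toMeasurableEquiv
  have hmap := integral_map_equiv (μ := volume) e F
  rw [show ⇑e = L from rfl] at hmap
  rw [← hmap, Real.map_linearMap_volume_pi_eq_smul_volume_pi hL, integral_smul_measure,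
    ENNReal.toReal_ofReal (abs_nonneg _), abs_inv]

theorem integral_comp_perm (σ : Equiv.Perm ι) (F : (ι → ℝ) → E) :
    ∫ x, F (x ∘ σ) = ∫ x, F x := by
  convert (volume_measurePreserving_piCongrLeft (fun _ : ι => ℝ) σ.symm).integral_comp' F
    using 3 with x
  congr 1
  funext i
  rw [MeasurableEquiv.coe_piCongrLeft, Equiv.piCongrLeft_apply_eq_cast]
  simp

variable [DecidableEq ι]

noncomputable def scaleCoord (j : ι) (a : ℝ) : (ι → ℝ) →L[ℝ] ι → ℝ :=
  LinearMap.toContinuousLinearMap (Matrix.toLin' (Matrix.diagonal (Function.update 1 j a)))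

theorem scaleCoord_apply (j : ι) (a : ℝ) (x : ι → ℝ) :
    scaleCoord j a x = Function.update x j (a * x j) := by
  funext i
  by_cases h : i = j
  · subst h; simp [scaleCoord, Matrix.mulVec_diagonal]
  · simp [scaleCoord, Matrix.mulVec_diagonal, h]

theorem scaleCoord_single (j : ι) (a : ℝ) (i : ι) :
    scaleCoord j a (Pi.single i 1) = Function.update (1 : ι → ℝ) j a i • Pi.single i 1 := by
  funext k
  by_cases h : k = i
  · subst h; by_cases h' : k = j <;> simp [scaleCoord_apply, h']
  · rcases eq_or_ne k j with rfl | h'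
    · simp [scaleCoord_apply, h]
    · simp [scaleCoord_apply, h, h']

theorem det_scaleCoord (j : ι) (a : ℝ) :
    LinearMap.det (scaleCoord j a : (ι → ℝ) →ₗ[ℝ] ι → ℝ) = a := by
  rw [scaleCoord, LinearMap.coe_toContinuousLinearMap, LinearMap.det_toLin', Matrix.det_diagonal,
    Finset.prod_update_of_mem (Finset.mem_univ j)]
  simp

theorem integral_comp_scaleCoord_add {a : ℝ} (ha : a ≠ 0) (j : ι) (c : ι → ℝ)
    (F : (ι → ℝ) → E) : ∫ x, F (scaleCoord j a x + c) = |a|⁻¹ • ∫ x, F x := by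
  have hdet : LinearMap.det (scaleCoord j a : (ι → ℝ) →ₗ[ℝ] ι → ℝ) ≠ 0 := by
    rwa [det_scaleCoord]
  have h := integral_comp_linearMap_pi hdet fun y => F (y + c)
  rwa [det_scaleCoord, integral_add_right_eq_self] at h

end ChangeOfVariables

section Derivatives

variable {E : Type*} [NormedAddCommGroup E] [NormedSpace ℝ E] {u : E → ℝ}

theorem fderiv_apply_eq_of_comp_eq (hu : Differentiable ℝ u) (T : E →L[ℝ] E)
    (hT : ∀ x, u (T x) = u x) (x w : E) : fderiv ℝ u x w = fderiv ℝ u (T x) (T w) := by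
  have h := (hu (T x)).hasFDerivAt.comp x T.hasFDerivAt
  rw [show u ∘ T = u from funext hT] at h
  rw [h.fderiv]
  rfl

theorem fderiv_comp_clm_add_apply {T : E →L[ℝ] E} {c x : E}
    (hu : DifferentiableAt ℝ u (T x + c)) (w : E) :
    fderiv ℝ (fun x => u (T x + c)) x w = fderiv ℝ u (T x + c) (T w) := by
  have h : HasFDerivAt (fun x => u (T x + c)) ((fderiv ℝ u (T x + c)).comp T) x :=
    hu.hasFDerivAt.comp x (T.hasFDerivAt.add_const c)
  rw [h.fderiv]
  rfl

theorem deriv_comp_add_smul {p w : E} {t : ℝ} (hu : DifferentiableAt ℝ u (p + t • w)) :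
    deriv (fun s : ℝ => u (p + s • w)) t = fderiv ℝ u (p + t • w) w := by
  have hline : HasDerivAt (fun s : ℝ => p + s • w) w t := by
    simpa using ((hasDerivAt_id t).smul_const w).const_add p
  exact (hu.hasFDerivAt.comp_hasDerivAt t hline).deriv

end Derivatives

section PartialDerivatives

variable {u : R3 → ℝ}

theorem fderiv_apply_single (x : R3) (i : Fin 3) (c : ℝ) :
    fderiv ℝ u x (Pi.single i c) = c * pd i u x := by
  have hc : (Pi.single i c : R3) = c • Pi.single i 1 := by
    rw [← Pi.single_smul', smul_eq_mul, mul_one]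
  rw [hc, map_smul, smul_eq_mul, pd]

theorem pd_comp_scaleCoord_add {j : Fin 3} {a : ℝ} {c x : R3}
    (hu : DifferentiableAt ℝ u (scaleCoord j a x + c)) (i : Fin 3) :
    pd i (fun x => u (scaleCoord j a x + c)) x
      = Function.update (1 : R3) j a i * pd i u (scaleCoord j a x + c) := by
  rw [pd, fderiv_comp_clm_add_apply hu, scaleCoord_single, map_smul, smul_eq_mul, pd]

theorem pd_linear_coord_add (a b : ℝ) (i j : Fin 3) (x : R3) :
    pd i (fun x => a * x j + b) x = if i = j then a else 0 := by
  have h : HasFDerivAt (fun x : R3 => a * x j + b) (a • ContinuousLinearMap.proj j) x :=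
    (((ContinuousLinearMap.proj j : R3 →L[ℝ] ℝ).hasFDerivAt).const_mul a).add_const b
  rw [pd, h.fderiv]
  by_cases hij : i = j
  · subst hij; simp
  · simp [hij, Ne.symm hij]

theorem integrable_sq_of_hasCompactSupport (hu : Continuous u) (hs : HasCompactSupport u) :
    Integrable fun x => u x ^ 2 := by
  simp only [sq]
  exact (hu.mul hu).integrable_of_hasCompactSupport hs.mul_left

theorem integrable_pd_sq (hu : ContDiff ℝ 1 u) (hs : HasCompactSupport u) (i : Fin 3) :
    Integrable fun x => pd i u x ^ 2 :=
  integrable_sq_of_hasCompactSupport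
    ((hu.continuous_fderiv one_ne_zero).clm_apply continuous_const) (hs.fderiv_apply ℝ _)

end PartialDerivatives

section Radial

variable {u : R3 → ℝ} {f : ℝ → ℝ}

theorem comp_eq_of_radial (hrad : ∀ x : R3, u x = f (√(∑ i, x i ^ 2))) {T : R3 → R3}
    (hT : ∀ x, ∑ i, T x i ^ 2 = ∑ i, x i ^ 2) (x : R3) : u (T x) = u x := by
  rw [hrad, hrad, hT]

theorem pd_eq_pd_comp_perm_of_radial (hrad : ∀ x : R3, u x = f (√(∑ i, x i ^ 2)))
    (hu : Differentiable ℝ u) (σ : Equiv.Perm (Fin 3)) (i : Fin 3) (x : R3) :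
    pd i u x = pd (σ.symm i) u (x ∘ σ) := by
  let T := LinearMap.toContinuousLinearMap (LinearMap.funLeft ℝ ℝ σ)
  have hT : ∀ x, u (T x) = u x :=
    comp_eq_of_radial hrad fun x => Equiv.sum_comp σ fun k => x k ^ 2
  rw [pd, fderiv_apply_eq_of_comp_eq hu T hT]
  exact congrArg (fderiv ℝ u (x ∘ σ)) (Pi.single_comp_equiv σ i 1)

theorem pd_eq_mul_pd_comp_reflect_of_radial (hrad : ∀ x : R3, u x = f (√(∑ i, x i ^ 2)))
    (hu : Differentiable ℝ u) (j i : Fin 3) (x : R3) :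
    pd i u x = Function.update (1 : R3) j (-1) i * pd i u (scaleCoord j (-1) x) := by
  have hT : ∀ x, u (scaleCoord j (-1) x) = u x := by
    refine comp_eq_of_radial hrad fun x => Finset.sum_congr rfl fun k _ => ?_
    by_cases hk : k = j
    · subst hk; simp [scaleCoord_apply]
    · simp [scaleCoord_apply, hk]
  rw [pd, fderiv_apply_eq_of_comp_eq hu _ hT, scaleCoord_single, map_smul, smul_eq_mul, pd]

theorem integral_pd_sq_eq_of_radial (hrad : ∀ x : R3, u x = f (√(∑ i, x i ^ 2)))
    (hu : Differentiable ℝ u) (i j : Fin 3) :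
    ∫ x, pd i u x ^ 2 = ∫ x, pd j u x ^ 2 := by
  have h : ∀ x, pd i u x = pd j u (x ∘ Equiv.swap i j) := fun x => by
    rw [pd_eq_pd_comp_perm_of_radial hrad hu (Equiv.swap i j), Equiv.symm_swap,
      Equiv.swap_apply_left]
  simp_rw [h]
  exact integral_comp_perm (Equiv.swap i j) fun x => pd j u x ^ 2

theorem integral_sum_pd_sq_of_radial (hrad : ∀ x : R3, u x = f (√(∑ i, x i ^ 2)))
    (hu : ContDiff ℝ 1 u) (hs : HasCompactSupport u) :
    ∫ x, ∑ i, pd i u x ^ 2 = 3 * ∫ x, pd 0 u x ^ 2 := by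
  have hud := hu.differentiable one_ne_zero
  rw [integral_finsetSum _ fun i _ => integrable_pd_sq hu hs i, Fin.sum_univ_three,
    integral_pd_sq_eq_of_radial hrad hud 1 0, integral_pd_sq_eq_of_radial hrad hud 2 0]
  ring

theorem integral_pd_mul_pd_eq_zero_of_radial (hrad : ∀ x : R3, u x = f (√(∑ i, x i ^ 2)))
    (hu : Differentiable ℝ u) {i j : Fin 3} (hij : i ≠ j) :
    ∫ x, pd i u x * pd j u x = 0 := by
  let G : R3 → ℝ := fun x => pd i u x * pd j u x
  have hodd : ∀ x, G x = -G (scaleCoord j (-1) x) := fun x => by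
    simp only [G]
    rw [pd_eq_mul_pd_comp_reflect_of_radial hrad hu j i,
      pd_eq_mul_pd_comp_reflect_of_radial hrad hu j j, Function.update_of_ne hij,
      Function.update_self]
    simp
  have hrefl := integral_comp_scaleCoord_add (neg_ne_zero.2 one_ne_zero) j 0 G
  simp only [add_zero, abs_neg, abs_one, inv_one, one_smul] at hrefl
  have h : ∫ x, G x = -∫ x, G x :=
    calc ∫ x, G x = ∫ x, -G (scaleCoord j (-1) x) := integral_congr_ae (.of_forall hodd)
      _ = -∫ x, G x := by rw [integral_neg, hrefl]
  change ∫ x, G x = 0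
  linarith

end Radial

theorem sqrt_sum_sq_eq_abs_of_eq_zero {p : Fin 3 → ℝ} (h1 : p 1 = 0) (h2 : p 2 = 0) :
    √(∑ i, p i ^ 2) = |p 0| := by
  rw [Fin.sum_univ_three, h1, h2, ← Real.sqrt_sq_eq_abs]
  ring_nf

section Boost

variable {u : R3 → ℝ}

noncomputable def boost (γ v t : ℝ) (x : R3) : R3 :=
  scaleCoord 0 γ x + t • Pi.single 0 (-(γ * v))

theorem update_eq_boost (γ v t : ℝ) (x : R3) :
    Function.update x 0 (γ * (x 0 - v * t)) = boost γ v t x := by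
  funext k
  by_cases hk : k = 0
  · subst hk
    simp only [boost, scaleCoord_apply, Pi.add_apply, Pi.smul_apply, Function.update_self,
      Pi.single_eq_same, smul_eq_mul]
    ring
  · simp [boost, scaleCoord_apply, hk]

theorem integral_comp_boost {γ : ℝ} (hγ : 0 < γ) (v t : ℝ) (F : R3 → ℝ) :
    ∫ x, F (boost γ v t x) = γ⁻¹ * ∫ x, F x := by
  simp only [boost]
  rw [integral_comp_scaleCoord_add hγ.ne', abs_of_pos hγ, smul_eq_mul]

theorem pd_comp_boost (hu : Differentiable ℝ u) (γ v t : ℝ) (i : Fin 3) (x : R3) :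
    pd i (fun x => u (boost γ v t x)) x
      = Function.update (1 : R3) 0 γ i * pd i u (boost γ v t x) :=
  pd_comp_scaleCoord_add (hu _) i

theorem deriv_comp_boost (hu : Differentiable ℝ u) (γ v t : ℝ) (x : R3) :
    deriv (fun s => u (boost γ v s x)) t = -(γ * v) * pd 0 u (boost γ v t x) := by
  simp only [boost]
  rw [deriv_comp_add_smul (hu _), fderiv_apply_single]

theorem momentum_density_boost (hu : Differentiable ℝ u) (ω₀ γ v t : ℝ) (i : Fin 3) (x : R3) :
    deriv (fun s => u (boost γ v s x)) t * pd i (fun x => u (boost γ v t x)) x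
        + deriv (fun s => ω₀ * γ * (v * x 0 - s)) t * pd i (fun x => ω₀ * γ * (v * x 0 - t)) x
          * u (boost γ v t x) ^ 2
      = -(γ * v * Function.update (1 : R3) 0 γ i)
          * (pd 0 u (boost γ v t x) * pd i u (boost γ v t x)
            + if i = 0 then ω₀ ^ 2 * u (boost γ v t x) ^ 2 else 0) := by
  have hphase : pd i (fun x : R3 => ω₀ * γ * (v * x 0 - t)) x
      = if i = 0 then ω₀ * γ * v else 0 := by
    convert pd_linear_coord_add (ω₀ * γ * v) (-(ω₀ * γ * t)) i 0 x using 2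
    funext y
    ring
  have hphase_t : deriv (fun s => ω₀ * γ * (v * x 0 - s)) t = -(ω₀ * γ) := by simp
  rw [deriv_comp_boost hu, pd_comp_boost hu, hphase, hphase_t]
  by_cases hi : i = 0
  · rw [hi, Function.update_self, if_pos rfl, if_pos rfl]
    ring
  · rw [Function.update_of_ne hi, if_neg hi, if_neg hi, Pi.one_apply]
    ring

theorem integral_momentum_density_boost (hu : Differentiable ℝ u) {γ : ℝ} (hγ : 0 < γ)
    (ω₀ v t : ℝ) (i : Fin 3) :
    ∫ x, (deriv (fun s => u (boost γ v s x)) t * pd i (fun x => u (boost γ v t x)) x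
        + deriv (fun s => ω₀ * γ * (v * x 0 - s)) t * pd i (fun x => ω₀ * γ * (v * x 0 - t)) x
          * u (boost γ v t x) ^ 2)
      = -(v * Function.update (1 : R3) 0 γ i)
          * ∫ z, (pd 0 u z * pd i u z + if i = 0 then ω₀ ^ 2 * u z ^ 2 else 0) := by
  simp_rw [momentum_density_boost hu]
  rw [integral_const_mul,
    integral_comp_boost hγ v t fun z => pd 0 u z * pd i u z + if i = 0 then ω₀ ^ 2 * u z ^ 2 else 0]
  field_simp

end Boost

/-- the matter-field momentum
`P = ∫(∂ₜu_v ∇u_v + ∂ₜS_v ∇S_v u_v²) dx` of the boosted soliton is parallel to the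
direction of motion `e₁` (its second and third components vanish), its first component is
`−γvm`, its magnitude is `γ|v|m` where `m = (1/3)∫|∇u₀|² + ω₀²∫u₀²`, and consequently the
mass `|P|/|v|` of the moving soliton equals `γm`. -/
theorem momentum_and_mass_of_moving_soliton
    (u₀ : R3 → ℝ) (hu : ContDiff ℝ 1 u₀) (hsupp : HasCompactSupport u₀)
    (f : ℝ → ℝ) (hrad : ∀ x : R3, u₀ x = f (Real.sqrt (∑ i, (x i) ^ 2)))
    (ω₀ v : ℝ) (hv : v ∈ Set.Ioo (-1 : ℝ) 1) (hv0 : v ≠ 0)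
    (γ : ℝ) (hγ : γ = 1 / Real.sqrt (1 - v ^ 2))
    (uv Sv : ℝ → R3 → ℝ)
    (huv : ∀ t : ℝ, ∀ x : R3, uv t x = u₀ (Function.update x 0 (γ * (x 0 - v * t))))
    (hSv : ∀ t : ℝ, ∀ x : R3, Sv t x = ω₀ * γ * (v * x 0 - t))
    (m : ℝ)
    (hm : m = (1 / 3) * (∫ x : R3, ∑ i, (pd i u₀ x) ^ 2) + ω₀ ^ 2 * ∫ x : R3, (u₀ x) ^ 2)
    (P : ℝ → Fin 3 → ℝ)
    (hP : ∀ t : ℝ, ∀ i : Fin 3, P t i =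
      ∫ x : R3, (deriv (fun s => uv s x) t * pd i (uv t) x
        + deriv (fun s => Sv s x) t * pd i (Sv t) x * (uv t x) ^ 2)) :
    ∀ t : ℝ,
      P t 1 = 0 ∧ P t 2 = 0 ∧ P t 0 = -(γ * v * m)
      ∧ Real.sqrt (∑ i, (P t i) ^ 2) = γ * |v| * m
      ∧ Real.sqrt (∑ i, (P t i) ^ 2) / |v| = γ * m := by
  intro t
  have hγ_pos : 0 < γ := by
    rw [hγ]
    exact one_div_pos.2 (Real.sqrt_pos.2 (by nlinarith [hv.1, hv.2]))
  have hud : Differentiable ℝ u₀ := hu.differentiable one_ne_zero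
  obtain rfl : uv = fun s x => u₀ (boost γ v s x) := by
    funext s x; rw [huv, update_eq_boost]
  obtain rfl : Sv = fun s x => ω₀ * γ * (v * x 0 - s) := funext fun s => funext (hSv s)
  have hP_ne : ∀ i ≠ 0, P t i = 0 := fun i hi => by
    rw [hP, integral_momentum_density_boost hud hγ_pos]
    simp [hi, integral_pd_mul_pd_eq_zero_of_radial hrad hud (Ne.symm hi)]
  have hP0 : P t 0 = -(γ * v * m) := by
    rw [hP, integral_momentum_density_boost hud hγ_pos]
    simp only [if_pos, Function.update_self, ← sq]
    have hu_sq := integrable_sq_of_hasCompactSupport hu.continuous hsupp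
    rw [integral_add (integrable_pd_sq hu hsupp 0) (hu_sq.const_mul _), integral_const_mul, hm,
      integral_sum_pd_sq_of_radial hrad hu hsupp]
    ring
  have hm_nonneg : 0 ≤ m := by
    have : 0 ≤ ∫ x : R3, ∑ i, pd i u₀ x ^ 2 := integral_nonneg fun x => by positivity
    have : 0 ≤ ∫ x : R3, u₀ x ^ 2 := integral_nonneg fun x => by positivity
    rw [hm]
    positivity
  have hP1 := hP_ne 1 (by decide)
  have hP2 := hP_ne 2 (by decide)
  have hnorm : √(∑ i, P t i ^ 2) = γ * |v| * m := by
    rw [sqrt_sum_sq_eq_abs_of_eq_zero hP1 hP2, hP0, abs_neg, abs_mul, abs_mul, abs_of_pos hγ_pos,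
      abs_of_nonneg hm_nonneg]
  refine ⟨hP1, hP2, hP0, hnorm, ?_⟩
  rw [hnorm]
  field_simp
end
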